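/- In the Hamilton algebra Ha(N), the elements J_ij' := J_ij R + G_i F_j − G_j F_i of U(Ha(N)) satisfy [J_ij', J_kl'] = R·(δ_il J_jk' + δ_jk J_il' − δ_jl J_ik' − δ_ik J_jl'), i.e. they generate a copy of so(N) in U(Ha(N)) up to the central factor R. -/

import Mathlib

/-!
Write `J'_ij = J_ij R + L_ij` with `L_ij = G_i F_j − G_j F_i`. Since `⁅G_i, F_j⁆ = δ_ij R` with `R`
central, the `L_ij` satisfy the `so(N)` relations with factor `−R`. The `J_ij` act on `G` and `F` by
the vector representation, so `⁅J_ij, L_lm⁆` is again the `so(N)` right-hand side in `L`, and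
the two cross terms `⁅J_ij R, L_lm⁆`, `⁅L_ij, J_lm R⁆` each contribute `R` times it. Together
with `⁅J_ij R, J_lm R⁆ = R · (J-relation) · R` the total is `R` times the `so(N)` right-hand
side in `J'`.
-/

open UniversalEnvelopingAlgebra

/-- Kronecker delta with values in a field `k`. -/
def kdelta (k : Type*) [Field k] {N : ℕ} (a b : Fin N) : k := if a = b then 1 else 0

section AssociativeLie

attribute [local instance] LieRing.ofAssociativeRing

namespace Ring

variable {A : Type*} [Ring A]

theorem lie_mul (a b c : A) : ⁅a, b * c⁆ = ⁅a, b⁆ * c + b * ⁅a, c⁆ := by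
  simp only [lie_def]; noncomm_ring

theorem mul_lie (a b c : A) : ⁅a * b, c⁆ = a * ⁅b, c⁆ + ⁅a, c⁆ * b := by
  simp only [lie_def]; noncomm_ring

end Ring

namespace Commute

variable {A : Type*} [Ring A] {x y r : A}

theorem mul_right_lie (hx : Commute x r) (hy : Commute y r) : ⁅x * r, y⁆ = r * ⁅x, y⁆ := by
  rw [Ring.mul_lie, hy.symm.lie_eq, mul_zero, zero_add, Ring.lie_def]
  exact ((hx.mul_left hy).sub_left (hy.mul_left hx)).eq

theorem mul_right_lie_mul_right (hx : Commute x r) (hy : Commute y r) :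
    ⁅x * r, y * r⁆ = r * (⁅x, y⁆ * r) := by
  rw [mul_right_lie hx (hy.mul_left (Commute.refl r)), Ring.lie_mul, hx.lie_eq, mul_zero, add_zero]

end Commute

theorem kdelta_comm (k : Type*) [Field k] {N : ℕ} (a b : Fin N) : kdelta k a b = kdelta k b a := by
  simp only [kdelta, eq_comm]

section SoBracket

variable (k : Type*) [Field k] {M : Type*} [AddCommGroup M] [Module k M] {N : ℕ}

/-- The right-hand side of the `so(N)` relation `⁅X_ij, X_lm⁆ = soBracket k X i j l m`. -/
def soBracket (X : Fin N → Fin N → M) (i j l m : Fin N) : M :=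
  kdelta k i m • X j l + kdelta k j l • X i m - kdelta k j m • X i l - kdelta k i l • X j m

variable {k}

theorem soBracket_add (X Y : Fin N → Fin N → M) (i j l m : Fin N) :
    soBracket k (fun a b => X a b + Y a b) i j l m =
      soBracket k X i j l m + soBracket k Y i j l m := by
  simp only [soBracket]; module

theorem soBracket_swap {X : Fin N → Fin N → M} (hX : ∀ a b, X a b = -X b a) (i j l m : Fin N) :
    soBracket k X l m i j = -soBracket k X i j l m := by
  simp only [soBracket]
  rw [hX m i, hX l j, hX l i, hX m j, kdelta_comm k l j, kdelta_comm k m i, kdelta_comm k m j,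
    kdelta_comm k l i]
  module

theorem LinearMap.map_soBracket {M' : Type*} [AddCommGroup M'] [Module k M'] (φ : M →ₗ[k] M')
    (X : Fin N → Fin N → M) (i j l m : Fin N) :
    φ (soBracket k X i j l m) = soBracket k (fun a b => φ (X a b)) i j l m := by
  simp only [soBracket, map_add, map_sub, map_smul]

theorem soBracket_mul_right {A : Type*} [Ring A] [Algebra k A] (X : Fin N → Fin N → A) (c : A)
    (i j l m : Fin N) :
    soBracket k (fun a b => X a b * c) i j l m = soBracket k X i j l m * c := by
  simp only [soBracket, add_mul, sub_mul, smul_mul_assoc]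

end SoBracket

section Hamilton

variable {k A : Type*} [Field k] [Ring A] [Algebra k A] {N : ℕ}

def angularMomentum (G F : Fin N → A) (a b : Fin N) : A := G a * F b - G b * F a

theorem angularMomentum_antisymm (G F : Fin N → A) (a b : Fin N) :
    angularMomentum G F a b = -angularMomentum G F b a :=
  (neg_sub _ _).symm

theorem commute_angularMomentum {G F : Fin N → A} {r : A} (hGr : ∀ a, Commute (G a) r)
    (hFr : ∀ a, Commute (F a) r) (a b : Fin N) : Commute (angularMomentum G F a b) r :=
  ((hGr a).mul_left (hFr b)).sub_left ((hGr b).mul_left (hFr a))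

variable {G F : Fin N → A} {r : A}

theorem mul_lie_mul_of_heisenberg (hGF : ∀ a b, ⁅G a, F b⁆ = kdelta k a b • r)
    (hGG : ∀ a b, ⁅G a, G b⁆ = 0) (hFF : ∀ a b, ⁅F a, F b⁆ = 0) (hGr : ∀ a, Commute (G a) r)
    (a b c d : Fin N) :
    ⁅G a * F b, G c * F d⁆ = r * (kdelta k a d • (G c * F b) - kdelta k b c • (G a * F d)) := by
  rw [Ring.mul_lie, Ring.lie_mul, Ring.lie_mul, ← lie_skew (F b), hGF, hGF, hGG, hFF,
    kdelta_comm k c b]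
  simp only [zero_mul, mul_zero, add_zero, zero_add, neg_mul, mul_neg, smul_mul_assoc,
    mul_smul_comm, ← mul_assoc, (hGr _).eq, mul_sub]
  module

theorem angularMomentum_lie_angularMomentum (hGF : ∀ a b, ⁅G a, F b⁆ = kdelta k a b • r)
    (hGG : ∀ a b, ⁅G a, G b⁆ = 0) (hFF : ∀ a b, ⁅F a, F b⁆ = 0) (hGr : ∀ a, Commute (G a) r)
    (a b c d : Fin N) :
    ⁅angularMomentum G F a b, angularMomentum G F c d⁆ =
      -(r * soBracket k (angularMomentum G F) a b c d) := by
  simp only [angularMomentum, soBracket, lie_sub, sub_lie,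
    mul_lie_mul_of_heisenberg hGF hGG hFF hGr, mul_sub, mul_add, mul_smul_comm]
  module

theorem lie_angularMomentum {J : Fin N → Fin N → A}
    (hJG : ∀ i j l, ⁅J i j, G l⁆ = -(kdelta k i l • G j) + kdelta k j l • G i)
    (hJF : ∀ i j l, ⁅J i j, F l⁆ = -(kdelta k i l • F j) + kdelta k j l • F i)
    (a b c d : Fin N) :
    ⁅J a b, angularMomentum G F c d⁆ = soBracket k (angularMomentum G F) a b c d := by
  simp only [angularMomentum, soBracket, lie_sub, Ring.lie_mul, hJG, hJF, add_mul, mul_add,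
    neg_mul, mul_neg, smul_mul_assoc, mul_smul_comm, smul_sub]
  module

/-- The paper's `J'_ab`. -/
def hamiltonSo (J : Fin N → Fin N → A) (G F : Fin N → A) (r : A) (a b : Fin N) : A :=
  J a b * r + G a * F b - G b * F a

theorem hamiltonSo_eq_add (J : Fin N → Fin N → A) :
    hamiltonSo J G F r = fun a b => J a b * r + angularMomentum G F a b :=
  funext₂ fun _ _ => add_sub_assoc _ _ _

theorem hamiltonSo_lie_hamiltonSo {J : Fin N → Fin N → A}
    (hJJ : ∀ i j l m, ⁅J i j, J l m⁆ = soBracket k J i j l m)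
    (hGF : ∀ i j, ⁅G i, F j⁆ = kdelta k i j • r)
    (hJG : ∀ i j l, ⁅J i j, G l⁆ = -(kdelta k i l • G j) + kdelta k j l • G i)
    (hJF : ∀ i j l, ⁅J i j, F l⁆ = -(kdelta k i l • F j) + kdelta k j l • F i)
    (hGG : ∀ i j, ⁅G i, G j⁆ = 0) (hFF : ∀ i j, ⁅F i, F j⁆ = 0)
    (hJr : ∀ i j, Commute (J i j) r) (hGr : ∀ i, Commute (G i) r) (hFr : ∀ i, Commute (F i) r)
    (a b c d : Fin N) :
    ⁅hamiltonSo J G F r a b, hamiltonSo J G F r c d⁆ =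
      r * soBracket k (hamiltonSo J G F r) a b c d := by
  have hLr := commute_angularMomentum hGr hFr
  have hJrJr : ⁅J a b * r, J c d * r⁆ = r * (soBracket k J a b c d * r) := by
    rw [(hJr a b).mul_right_lie_mul_right (hJr c d), hJJ]
  have hJrL (i j l m : Fin N) :
      ⁅J i j * r, angularMomentum G F l m⁆ = r * soBracket k (angularMomentum G F) i j l m := by
    rw [(hJr i j).mul_right_lie (hLr l m), lie_angularMomentum hJG hJF]
  have hLJr : ⁅angularMomentum G F a b, J c d * r⁆ =
      r * soBracket k (angularMomentum G F) a b c d := by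
    rw [← lie_skew, hJrL, soBracket_swap (angularMomentum_antisymm G F), mul_neg, neg_neg]
  have hLL := angularMomentum_lie_angularMomentum hGF hGG hFF hGr a b c d
  rw [hamiltonSo_eq_add]
  simp only [lie_add, add_lie, hJrJr, hJrL, hLJr, hLL, soBracket_add, soBracket_mul_right, mul_add]
  abel

end Hamilton

end AssociativeLie

theorem hamilton_virtual_copy_soN_general
    (k : Type*) [Field k] (g : Type*) [LieRing g] [LieAlgebra k g] (N : ℕ)
    (J : Fin N → Fin N → g) (G F : Fin N → g) (R : g)
    (hJJ : ∀ i j l m, ⁅J i j, J l m⁆ =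
      kdelta k i m • J j l + kdelta k j l • J i m - kdelta k j m • J i l - kdelta k i l • J j m)
    (hGF : ∀ i j, ⁅G i, F j⁆ = kdelta k i j • R)
    (hJG : ∀ i j l, ⁅J i j, G l⁆ = -(kdelta k i l • G j) + kdelta k j l • G i)
    (hJF : ∀ i j l, ⁅J i j, F l⁆ = -(kdelta k i l • F j) + kdelta k j l • F i)
    (hGG : ∀ i j, ⁅G i, G j⁆ = 0) (hFF : ∀ i j, ⁅F i, F j⁆ = 0)
    (hJR : ∀ i j, ⁅J i j, R⁆ = 0) (hGR : ∀ i, ⁅G i, R⁆ = 0) (hFR : ∀ i, ⁅F i, R⁆ = 0) :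
    ∀ i j l m,
      ⁅(fun a b => (ι k (J a b) : UniversalEnvelopingAlgebra k g) * ι k R
          + ι k (G a) * ι k (F b) - ι k (G b) * ι k (F a)) i j,
        (fun a b => (ι k (J a b) : UniversalEnvelopingAlgebra k g) * ι k R
          + ι k (G a) * ι k (F b) - ι k (G b) * ι k (F a)) l m⁆
      = ι k R *
        (kdelta k i m • ((fun a b => (ι k (J a b) : UniversalEnvelopingAlgebra k g) * ι k R
            + ι k (G a) * ι k (F b) - ι k (G b) * ι k (F a)) j l)
         + kdelta k j l • ((fun a b => (ι k (J a b) : UniversalEnvelopingAlgebra k g) * ι k R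
            + ι k (G a) * ι k (F b) - ι k (G b) * ι k (F a)) i m)
         - kdelta k j m • ((fun a b => (ι k (J a b) : UniversalEnvelopingAlgebra k g) * ι k R
            + ι k (G a) * ι k (F b) - ι k (G b) * ι k (F a)) i l)
         - kdelta k i l • ((fun a b => (ι k (J a b) : UniversalEnvelopingAlgebra k g) * ι k R
            + ι k (G a) * ι k (F b) - ι k (G b) * ι k (F a)) j m)) := by
  let _ : LieRing (UniversalEnvelopingAlgebra k g) := LieRing.ofAssociativeRing
  have hι (x y : g) : ⁅ι k x, ι k y⁆ = ι k ⁅x, y⁆ := ((ι k).map_lie x y).symm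
  have hcomm {x : g} (hx : ⁅x, R⁆ = 0) : Commute (ι k x) (ι k R) :=
    commute_iff_lie_eq.mpr (by rw [hι, hx, map_zero])
  exact hamiltonSo_lie_hamiltonSo (k := k)
    (fun a b c d => by rw [hι, hJJ]; exact (ι k).toLinearMap.map_soBracket J a b c d)
    (fun a b => by rw [hι, hGF, map_smul])
    (fun a b c => by rw [hι, hJG, map_add, map_neg, map_smul, map_smul])
    (fun a b c => by rw [hι, hJF, map_add, map_neg, map_smul, map_smul])
    (fun a b => by rw [hι, hGG, map_zero]) (fun a b => by rw [hι, hFF, map_zero])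
    (fun a b => hcomm (hJR a b)) (fun a => hcomm (hGR a)) (fun a => hcomm (hFR a))

/-- In the Hamilton algebra `Ha(N)`, the elements `J'_ij = J_ij R + G_i F_j − G_j F_i`
satisfy the `so(N)` commutation relations up to the central factor `R`:
`⁅J'_ij, J'_kl⁆ = R·(δ_il J'_jk + δ_jk J'_il − δ_jl J'_ik − δ_ik J'_jl)`. -/
theorem hamilton_virtual_copy_soN
    (k : Type*) [Field k] (g : Type*) [LieRing g] [LieAlgebra k g] (N : ℕ)
    (J : Fin N → Fin N → g) (G F : Fin N → g) (R : g)
    (hJa : ∀ i j, J i j = -J j i)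
    (hJJ : ∀ i j l m, ⁅J i j, J l m⁆ =
      kdelta k i m • J j l + kdelta k j l • J i m - kdelta k j m • J i l - kdelta k i l • J j m)
    (hGF : ∀ i j, ⁅G i, F j⁆ = kdelta k i j • R)
    (hJG : ∀ i j l, ⁅J i j, G l⁆ = -(kdelta k i l • G j) + kdelta k j l • G i)
    (hJF : ∀ i j l, ⁅J i j, F l⁆ = -(kdelta k i l • F j) + kdelta k j l • F i)
    (hGG : ∀ i j, ⁅G i, G j⁆ = 0) (hFF : ∀ i j, ⁅F i, F j⁆ = 0)
    (hJR : ∀ i j, ⁅J i j, R⁆ = 0) (hGR : ∀ i, ⁅G i, R⁆ = 0) (hFR : ∀ i, ⁅F i, R⁆ = 0) :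
    ∀ i j l m,
      ⁅(fun a b => (ι k (J a b) : UniversalEnvelopingAlgebra k g) * ι k R
          + ι k (G a) * ι k (F b) - ι k (G b) * ι k (F a)) i j,
        (fun a b => (ι k (J a b) : UniversalEnvelopingAlgebra k g) * ι k R
          + ι k (G a) * ι k (F b) - ι k (G b) * ι k (F a)) l m⁆
      = ι k R *
        (kdelta k i m • ((fun a b => (ι k (J a b) : UniversalEnvelopingAlgebra k g) * ι k R
            + ι k (G a) * ι k (F b) - ι k (G b) * ι k (F a)) j l)
         + kdelta k j l • ((fun a b => (ι k (J a b) : UniversalEnvelopingAlgebra k g) * ι k R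
            + ι k (G a) * ι k (F b) - ι k (G b) * ι k (F a)) i m)
         - kdelta k j m • ((fun a b => (ι k (J a b) : UniversalEnvelopingAlgebra k g) * ι k R
            + ι k (G a) * ι k (F b) - ι k (G b) * ι k (F a)) i l)
         - kdelta k i l • ((fun a b => (ι k (J a b) : UniversalEnvelopingAlgebra k g) * ι k R
            + ι k (G a) * ι k (F b) - ι k (G b) * ι k (F a)) j m)) :=
  hamilton_virtual_copy_soN_general k g N J G F R hJJ hGF hJG hJF hGG hFF hJR hGR hFR
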